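/- If a random ordered point set P_x of n points in [0,2]² has no w-flat triple for some w with 0 < w ≤ 1, then there exists a point set P' with integer coordinates in {0,1,...,⌊2/w⌋}² realizing the same order type as P_x; consequently the norm of the order type of P_x is at most ⌊2/w⌋. -/

import Mathlib

/-! Snap every point to the nearest point of a grid `c + wℤ²` centred in `[0, 2]²`; this moves it
by at most `√2·w/2`. Move the points to their snapped images along straight lines. The orientation
determinant of a triple can only change sign by vanishing, i.e. when the moving triple is
collinear. Then one of the three moving points lies between the other two, so the corresponding
original point is within `√2·w` of the line through the other two originals, and the triple was
`w`-flat. Finally, the affine map `x ↦ c + w x` from `ℤ²` onto the grid preserves orientations. -/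

open MeasureTheory Metric Real

noncomputable section

abbrev Pt := EuclideanSpace ℝ (Fin 2)

/-- Twice the signed area of the triangle `a b c`; its sign is the orientation. -/
def det3 (a b c : Pt) : ℝ :=
  (b 0 - a 0) * (c 1 - a 1) - (b 1 - a 1) * (c 0 - a 0)

/-- Orientation sign of an ordered triple of planar points. -/
def ori (a b c : Pt) : ℝ := Real.sign (det3 a b c)

/-- The line through two points (as a subset of the plane). -/
def lineThrough (a b : Pt) : Set Pt := (affineSpan ℝ {a, b} : Set Pt)

/-- Distance from `x` to the line through `a` and `b`. -/
def distLine (x a b : Pt) : ℝ := Metric.infDist x (lineThrough a b)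

/-- A triple is `w`-flat if some point is within distance `√2·w` of the
line through the other two. -/
def WFlat (w : ℝ) (p q r : Pt) : Prop :=
  distLine p q r ≤ Real.sqrt 2 * w ∨ distLine q p r ≤ Real.sqrt 2 * w ∨
    distLine r p q ≤ Real.sqrt 2 * w

/-- The uniform probability measure on the closed disk of radius `δ` centered at `c`. -/
def unifDisk (c : Pt) (δ : ℝ) : Measure Pt :=
  (volume (Metric.closedBall c δ))⁻¹ • volume.restrict (Metric.closedBall c δ)

/-- Snapping a point to the nearest point of the grid `w·ℤ²`. -/
def snap (w : ℝ) (p : Pt) : Pt := WithLp.toLp 2 (fun i => w * (round (p i / w) : ℝ))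

open Set AffineMap

section Perturbation

variable {V : Type*} [NormedAddCommGroup V] [NormedSpace ℝ V]

lemma dist_lineMap_lineMap_le {a c a' c' : V} {t ε : ℝ} (ht : t ∈ Icc (0 : ℝ) 1)
    (ha : dist a a' ≤ ε) (hc : dist c c' ≤ ε) :
    dist (lineMap a c t) (lineMap a' c' t) ≤ ε := by
  obtain ⟨ht0, ht1⟩ := ht
  rw [lineMap_apply_module, lineMap_apply_module, dist_eq_norm] at *
  calc ‖(1 - t) • a + t • c - ((1 - t) • a' + t • c')‖
      = ‖(1 - t) • (a - a') + t • (c - c')‖ := by congr 1; module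
    _ ≤ (1 - t) * ‖a - a'‖ + t * ‖c - c'‖ := by
        refine (norm_add_le _ _).trans_eq ?_
        rw [norm_smul, norm_smul, Real.norm_of_nonneg (sub_nonneg.2 ht1),
          Real.norm_of_nonneg ht0]
    _ ≤ (1 - t) * ε + t * ε := by gcongr
    _ = ε := by ring

lemma infDist_affineSpan_le_of_wbtw {a b c a' b' c' : V} {ε : ℝ} (h : Wbtw ℝ a' b' c')
    (ha : dist a a' ≤ ε) (hb : dist b b' ≤ ε) (hc : dist c c' ≤ ε) :
    infDist b (affineSpan ℝ {a, c}) ≤ 2 * ε := by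
  obtain ⟨t, ht, rfl⟩ := h
  calc infDist b (affineSpan ℝ {a, c}) ≤ dist b (lineMap a c t) :=
        infDist_le_dist_of_mem (lineMap_mem_affineSpan_pair t a c)
    _ ≤ dist b (lineMap a' c' t) + dist (lineMap a' c' t) (lineMap a c t) :=
        dist_triangle _ _ _
    _ ≤ ε + ε := by
        gcongr
        exact dist_lineMap_lineMap_le ht (dist_comm a a' ▸ ha) (dist_comm c c' ▸ hc)
    _ = 2 * ε := by ring

lemma Collinear.infDist_affineSpan_le_of_dist_le {p q r x y z : V} {ε : ℝ}
    (h : Collinear ℝ {x, y, z}) (hx : dist p x ≤ ε) (hy : dist q y ≤ ε) (hz : dist r z ≤ ε) :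
    infDist p (affineSpan ℝ {q, r}) ≤ 2 * ε ∨ infDist q (affineSpan ℝ {p, r}) ≤ 2 * ε ∨
      infDist r (affineSpan ℝ {p, q}) ≤ 2 * ε := by
  rcases h.wbtw_or_wbtw_or_wbtw with hxyz | hyzx | hzxy
  · exact .inr (.inl (infDist_affineSpan_le_of_wbtw hxyz hx hy hz))
  · exact .inr (.inr (infDist_affineSpan_le_of_wbtw hyzx.symm hx hz hy))
  · exact .inl (infDist_affineSpan_le_of_wbtw hzxy.symm hy hx hz)

end Perturbation

lemma ContinuousOn.sign_eq_of_forall_ne_zero {f : ℝ → ℝ} {a b : ℝ}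
    (hf : ContinuousOn f (uIcc a b)) (hne : ∀ t ∈ uIcc a b, f t ≠ 0) :
    Real.sign (f a) = Real.sign (f b) := by
  have h0 : (0 : ℝ) ∉ uIcc (f a) (f b) := fun h0 => by
    obtain ⟨t, ht, hft⟩ := intermediate_value_uIcc hf h0
    exact hne t ht hft
  rcases (hne a left_mem_uIcc).lt_or_gt with ha | ha <;>
    rcases (hne b right_mem_uIcc).lt_or_gt with hb | hb
  · rw [sign_of_neg ha, sign_of_neg hb]
  · exact absurd (mem_uIcc.2 (.inl ⟨ha.le, hb.le⟩)) h0
  · exact absurd (mem_uIcc.2 (.inr ⟨hb.le, ha.le⟩)) h0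
  · rw [sign_of_pos ha, sign_of_pos hb]

lemma collinear_of_det3_eq_zero {a b c : Pt} (h : det3 a b c = 0) : Collinear ℝ {a, b, c} := by
  obtain rfl | hab := eq_or_ne a b
  · simpa using collinear_pair ℝ a c
  suffices c ∈ line[ℝ, a, b] by
    rw [show ({a, b, c} : Set Pt) = {c, a, b} by rw [Set.insert_comm c a, Set.pair_comm c b]]
    exact collinear_insert_of_mem_affineSpan_pair this
  obtain ⟨i, hi⟩ : ∃ i, b i - a i ≠ 0 := by
    by_contra! hba
    exact hab (PiLp.ext fun i => by linarith [hba i])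
  refine mem_affineSpan_pair_iff_exists_lineMap_eq.2
    ⟨(c i - a i) / (b i - a i), PiLp.ext fun j => ?_⟩
  simp only [lineMap_apply_module', PiLp.add_apply, PiLp.smul_apply, PiLp.sub_apply, smul_eq_mul]
  unfold det3 at h
  fin_cases i <;> fin_cases j <;> simp only [Fin.zero_eta, Fin.mk_one] at hi ⊢ <;> field_simp <;>
    first | ring1 | linear_combination h | linear_combination -h

lemma wFlat_of_det3_eq_zero {w : ℝ} {p q r x y z : Pt} (hx : dist p x ≤ √2 * w / 2)
    (hy : dist q y ≤ √2 * w / 2) (hz : dist r z ≤ √2 * w / 2) (h : det3 x y z = 0) :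
    WFlat w p q r := by
  have := (collinear_of_det3_eq_zero h).infDist_affineSpan_le_of_dist_le hx hy hz
  rwa [show 2 * (√2 * w / 2) = √2 * w by ring] at this

lemma ori_eq_of_not_wFlat {w : ℝ} {p q r p' q' r' : Pt} (hpqr : ¬ WFlat w p q r)
    (hp : dist p' p ≤ √2 * w / 2) (hq : dist q' q ≤ √2 * w / 2) (hr : dist r' r ≤ √2 * w / 2) :
    ori p' q' r' = ori p q r := by
  have hclose {a a' : Pt} (ha : dist a' a ≤ √2 * w / 2) (t : ℝ) (ht : t ∈ uIcc 0 1) :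
      dist a (lineMap a a' t) ≤ √2 * w / 2 := by
    rw [uIcc_of_le zero_le_one] at ht
    rw [dist_comm, dist_lineMap_left, Real.norm_of_nonneg ht.1, dist_comm]
    exact (mul_le_of_le_one_left dist_nonneg ht.2).trans ha
  have hcont :
      Continuous fun t : ℝ => det3 (lineMap p p' t) (lineMap q q' t) (lineMap r r' t) := by
    unfold det3; fun_prop
  have := hcont.continuousOn.sign_eq_of_forall_ne_zero fun t ht h0 =>
    hpqr (wFlat_of_det3_eq_zero (hclose hp t ht) (hclose hq t ht) (hclose hr t ht) h0)
  simpa [ori] using this.symm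

lemma det3_homothety (c w : ℝ) (a b d : Fin 2 → ℝ) :
    det3 (WithLp.toLp 2 fun i => c + w * a i) (WithLp.toLp 2 fun i => c + w * b i)
      (WithLp.toLp 2 fun i => c + w * d i) =
        w ^ 2 * det3 (WithLp.toLp 2 a) (WithLp.toLp 2 b) (WithLp.toLp 2 d) := by
  simp only [det3]
  ring

lemma ori_homothety (c : ℝ) {w : ℝ} (hw : w ≠ 0) (a b d : Fin 2 → ℝ) :
    ori (WithLp.toLp 2 fun i => c + w * a i) (WithLp.toLp 2 fun i => c + w * b i)
      (WithLp.toLp 2 fun i => c + w * d i) =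
        ori (WithLp.toLp 2 a) (WithLp.toLp 2 b) (WithLp.toLp 2 d) := by
  have hw2 : 0 < w ^ 2 := by positivity
  rw [ori, ori, det3_homothety]
  rcases lt_trichotomy (det3 (WithLp.toLp 2 a) (WithLp.toLp 2 b) (WithLp.toLp 2 d)) 0 with h | h | h
  · rw [sign_of_neg h, sign_of_neg (mul_neg_of_pos_of_neg hw2 h)]
  · rw [h, mul_zero]
  · rw [sign_of_pos h, sign_of_pos (mul_pos hw2 h)]

lemma dist_le_of_abs_sub_le {p q : Pt} {δ : ℝ} (h : ∀ i, |p i - q i| ≤ δ) :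
    dist p q ≤ √2 * δ := by
  rw [EuclideanSpace.dist_eq, Fin.sum_univ_two, ← Real.sqrt_sq (le_trans (abs_nonneg _) (h 0)),
    ← Real.sqrt_mul zero_le_two]
  gcongr
  simp only [Real.dist_eq, sq_abs]
  have h0 := sq_le_sq' (abs_le.1 (h 0)).1 (abs_le.1 (h 0)).2
  have h1 := sq_le_sq' (abs_le.1 (h 1)).1 (abs_le.1 (h 1)).2
  linarith

/-- The offset `c` centring the grid `c + wℤ` in `[0, L]`: rounding to the unshifted grid `wℤ`
could send `L` to `w * (⌊L / w⌋ + 1)`. -/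
def gridOffset (L w : ℝ) : ℝ := (L - ⌊L / w⌋ * w) / 2

lemma round_sub_gridOffset_mem_Icc {L w x : ℝ} (hw : 0 < w) (hx : x ∈ Icc 0 L) :
    round ((x - gridOffset L w) / w) ∈ Icc 0 ⌊L / w⌋ := by
  have hfloor : ⌊L / w⌋ * w ≤ L := (le_div_iff₀ hw).1 (Int.floor_le _)
  have hceil : L < (⌊L / w⌋ + 1) * w := (div_lt_iff₀ hw).1 (Int.lt_floor_add_one _)
  unfold gridOffset
  constructor
  · have : -(1 / 2) ≤ (x - (L - ⌊L / w⌋ * w) / 2) / w := by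
      rw [le_div_iff₀ hw]; linarith [hx.1]
    rw [round_eq, Int.le_floor, Int.cast_zero]
    linarith
  · have : (x - (L - ⌊L / w⌋ * w) / 2) / w < ⌊L / w⌋ + 1 / 2 := by
      rw [div_lt_iff₀ hw]; linarith [hx.2]
    rw [round_eq, ← Int.lt_add_one_iff, Int.floor_lt]
    push_cast
    linarith

lemma abs_add_mul_round_sub_le {c w : ℝ} (hw : 0 < w) (x : ℝ) :
    |c + w * round ((x - c) / w) - x| ≤ w / 2 := by
  have := abs_sub_round ((x - c) / w)
  rw [abs_sub_comm] at this
  calc |c + w * round ((x - c) / w) - x| = w * |round ((x - c) / w) - (x - c) / w| := by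
        rw [← abs_of_pos hw, ← abs_mul, abs_of_pos hw]; congr 1; field_simp; ring
    _ ≤ w * (1 / 2) := by gcongr
    _ = w / 2 := by ring

theorem stmt16_general (n : ℕ) (P : Fin n → Pt) (hbox : ∀ i, ∀ j : Fin 2, P i j ∈ Set.Icc (0:ℝ) 2)
    (w : ℝ) (hw : 0 < w)
    (hflat : ∀ i j k : Fin n, i ≠ j → j ≠ k → i ≠ k → ¬ WFlat w (P i) (P j) (P k)) :
    ∃ Q : Fin n → Fin 2 → ℤ,
      (∀ i, ∀ j : Fin 2, 0 ≤ Q i j ∧ Q i j ≤ ⌊(2:ℝ)/w⌋) ∧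
      (∀ i j k : Fin n,
        ori (WithLp.toLp 2 (fun m => (Q i m : ℝ)) : Pt) (WithLp.toLp 2 (fun m => (Q j m : ℝ)) : Pt)
            (WithLp.toLp 2 (fun m => (Q k m : ℝ)) : Pt) = ori (P i) (P j) (P k)) := by
  set c := gridOffset 2 w
  set Q : Fin n → Fin 2 → ℤ := fun i j => round ((P i j - c) / w)
  refine ⟨Q, fun i j => round_sub_gridOffset_mem_Icc hw (hbox i j), fun i j k => ?_⟩
  have hclose (i : Fin n) :
      dist (WithLp.toLp 2 fun m => c + w * (Q i m : ℝ)) (P i) ≤ √2 * w / 2 :=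
    (dist_le_of_abs_sub_le fun m => abs_add_mul_round_sub_le hw (P i m)).trans_eq
      (mul_div_assoc _ _ _).symm
  obtain rfl | hij := eq_or_ne i j
  · simp [ori, det3]
  obtain rfl | hjk := eq_or_ne j k
  · simp [ori, det3, mul_comm]
  obtain rfl | hik := eq_or_ne i k
  · simp [ori, det3, mul_comm]
  rw [← ori_homothety c hw.ne']
  exact ori_eq_of_not_wFlat (hflat i j k hij hjk hik) (hclose i) (hclose j) (hclose k)

theorem stmt16 (n : ℕ) (P : Fin n → Pt) (hbox : ∀ i, ∀ j : Fin 2, P i j ∈ Set.Icc (0:ℝ) 2)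
    (w : ℝ) (hw : 0 < w) (hw1 : w ≤ 1)
    (hflat : ∀ i j k : Fin n, i ≠ j → j ≠ k → i ≠ k → ¬ WFlat w (P i) (P j) (P k)) :
    ∃ Q : Fin n → Fin 2 → ℤ,
      (∀ i, ∀ j : Fin 2, 0 ≤ Q i j ∧ Q i j ≤ ⌊(2:ℝ)/w⌋) ∧
      (∀ i j k : Fin n,
        ori (WithLp.toLp 2 (fun m => (Q i m : ℝ)) : Pt) (WithLp.toLp 2 (fun m => (Q j m : ℝ)) : Pt)
            (WithLp.toLp 2 (fun m => (Q k m : ℝ)) : Pt) = ori (P i) (P j) (P k)) :=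
  stmt16_general n P hbox w hw hflat
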